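/- arXiv:1310.0113 — 4 statements merged into one kernel-verified Lean document; each statement's English description precedes it below -/
import Mathlib

section
/- A group of order 8 admits an automorphism of order 3 if and only if it is isomorphic to the elementary abelian group (ℤ/2ℤ)^3 or to the quaternion group Q8. -/
/-!
An automorphism `φ` of order 3 of a group `G` of order 8 fixes a subgroup whose order divides 8
and is congruent to 8 mod 3, so `φ` fixes exactly `1` and one involution. Counting the
`φ`-orbits among the elements of each order, the numbers `n₂, n₄, n₈` of elements of order
2, 4, 8 satisfy `n₂ ≡ 1` and `n₄ ≡ n₈ ≡ 0 (mod 3)`; inversion pairs up the elements of order 4,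
so `n₄` is even, and `G` is not cyclic since otherwise `n₈ = totient 8 = 4`. Hence either
`n₄ = 0`, so that `G` has exponent 2 and is `(ℤ/2ℤ)³`, or `n₂ = 1`. In the latter case, for `x`
of order 4, both `y ∉ ⟨x⟩` and `xy` square to the unique involution `x²`, which gives the
relations `y² = x²`, `xy = yx⁻¹` of `Q8`. Conversely, rotating the coordinates of `(ℤ/2ℤ)³` and
rotating the units `i ↦ j ↦ k` of `Q8` are automorphisms of order 3.
-/

open Finset Subgroup

namespace Equiv.Perm

variable {α : Type*} [Fintype α] [DecidableEq α] {p : ℕ} [Fact p.Prime]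

theorem card_filter_modEq_card_filter_and_fixed {σ : Perm α} (hσ : σ ^ p = 1)
    {P : α → Prop} [DecidablePred P] (hP : ∀ x, P (σ x) ↔ P x) :
    #{x | P x} ≡ #{x | P x ∧ σ x = x} [MOD p] := by
  have hπ : σ.subtypePerm hP ^ p ^ 1 = 1 := by
    rw [pow_one, subtypePerm_pow]; simp only [hσ]; rfl
  have hfix : (σ.subtypePerm hP).supportᶜ.card = #{x | P x ∧ σ x = x} := by
    rw [← Fintype.card_coe, ← Fintype.card_subtype]
    exact Fintype.card_congr <| (Equiv.subtypeEquivRight fun x => by simp [Subtype.ext_iff]).trans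
      (Equiv.subtypeSubtypeEquivSubtypeInter P (fun x => σ x = x))
  rw [← Fintype.card_subtype, ← hfix]
  exact (card_compl_support_modEq hπ).symm

end Equiv.Perm

section Counting

variable {G : Type*} [Group G] [Fintype G] [DecidableEq G]

theorem MulAut.card_orderOf_eq_modEq {p : ℕ} [Fact p.Prime] {φ : MulAut G} (hφ : φ ^ p = 1)
    (d : ℕ) : #{g : G | orderOf g = d} ≡ #{g : G | orderOf g = d ∧ φ g = g} [MOD p] :=
  Equiv.Perm.card_filter_modEq_card_filter_and_fixed (σ := MulAut.toPerm G φ)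
    (by rw [← map_pow, hφ, map_one]) fun g => MulEquiv.orderOf_eq φ g ▸ Iff.rfl

theorem two_dvd_card_orderOf_eq {d : ℕ} (hd : 2 < d) : 2 ∣ #{g : G | orderOf g = d} := by
  have hinv : Equiv.inv G ^ 2 = 1 := Equiv.ext inv_inv
  have := Equiv.Perm.card_filter_modEq_card_filter_and_fixed hinv (P := (orderOf · = d))
    fun g => by rw [Equiv.inv_apply, orderOf_inv]
  have hfix : #{g : G | orderOf g = d ∧ (Equiv.inv G) g = g} = 0 := by
    refine card_eq_zero.2 <| filter_eq_empty_iff.2 fun g _ ⟨hgd, hg⟩ => ?_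
    have : orderOf g ∣ 2 :=
      orderOf_dvd_of_pow_eq_one (by rw [sq, ← inv_eq_iff_mul_eq_one]; exact hg)
    exact absurd (Nat.le_of_dvd two_pos this) (by omega)
  rwa [hfix, Nat.modEq_zero_iff_dvd] at this

end Counting

section

variable {G : Type*} [Group G]

theorem pow_val_add_of_orderOf_eq {m : ℕ} [NeZero m] {x : G} (hx : orderOf x = m)
    (i j : ZMod m) : x ^ (i + j).val = x ^ i.val * x ^ j.val := by
  rw [← pow_add, pow_eq_pow_iff_modEq, hx, ZMod.val_add]
  exact Nat.mod_modEq _ _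

namespace QuaternionGroup

variable {n : ℕ} [NeZero n] {x y : G}

def liftOfRelations (hx : orderOf x = 2 * n) (hyx : y ^ 2 = x ^ n) (hxy : x * y = y * x⁻¹) :
    QuaternionGroup n →* G where
  toFun
    | a i => x ^ i.val
    | xa i => y * x ^ i.val
  map_one' := by simp only [← a_zero, ZMod.val_zero, pow_zero]
  map_mul' := by
    have hadd := pow_val_add_of_orderOf_eq hx
    have hneg (i : ZMod (2 * n)) : x ^ (-i).val = (x ^ i.val)⁻¹ := by
      rw [eq_inv_iff_mul_eq_one, ← hadd, neg_add_cancel, ZMod.val_zero, pow_zero]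
    have hconj (i : ZMod (2 * n)) : x ^ i.val * y = y * (x ^ i.val)⁻¹ := by
      rw [← inv_pow]; exact (SemiconjBy.pow_right hxy.symm _).symm
    have hn : x ^ ((n : ZMod (2 * n))).val = x ^ n := by
      rw [ZMod.val_natCast, Nat.mod_eq_of_lt (by have := NeZero.pos n; omega)]
    rintro (i | i) (j | j)
    · exact hadd i j
    · show y * x ^ (j - i).val = x ^ i.val * (y * x ^ j.val)
      rw [sub_eq_neg_add, hadd, hneg, ← mul_assoc (x ^ i.val), hconj, mul_assoc]
    · show y * x ^ (i + j).val = y * x ^ i.val * x ^ j.val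
      rw [hadd, mul_assoc]
    · show x ^ ((n : ZMod (2 * n)) + j - i).val = y * x ^ i.val * (y * x ^ j.val)
      rw [show (n : ZMod (2 * n)) + j - i = n + (-i + j) by ring, hadd, hadd, hneg, hn, ← hyx,
        ← mul_assoc (y * _) y, mul_assoc y, hconj]
      simp only [sq, mul_assoc]

theorem liftOfRelations_injective (hx : orderOf x = 2 * n) (hy : y ∉ zpowers x)
    (hyx : y ^ 2 = x ^ n) (hxy : x * y = y * x⁻¹) :
    Function.Injective (liftOfRelations hx hyx hxy) := by
  rw [injective_iff_map_eq_one]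
  rintro (i | i) h
  · change x ^ i.val = 1 at h
    rw [← orderOf_dvd_iff_pow_eq_one, hx] at h
    rw [← a_zero, (ZMod.val_eq_zero i).mp (Nat.eq_zero_of_dvd_of_lt h (ZMod.val_lt i))]
  · change y * x ^ i.val = 1 at h
    exact absurd (eq_inv_of_mul_eq_one_left h ▸ inv_mem (pow_mem (mem_zpowers x) _)) hy

theorem nonempty_mulEquiv_of_relations (hG : Nat.card G = 4 * n) (hx : orderOf x = 2 * n)
    (hy : y ∉ zpowers x) (hyx : y ^ 2 = x ^ n) (hxy : x * y = y * x⁻¹) :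
    Nonempty (QuaternionGroup n ≃* G) :=
  have : Finite G := Nat.finite_of_card_ne_zero (by simp [hG, NeZero.ne n])
  ⟨.ofBijective _ <| (liftOfRelations_injective hx hy hyx hxy).bijective_of_nat_card_le <| by
    rw [hG, Nat.card_eq_fintype_card, card]⟩

end QuaternionGroup

theorem nonempty_mulEquiv_of_forall_sq_eq_one {n : ℕ} (hG : Nat.card G = 2 ^ n)
    (hsq : ∀ g : G, g ^ 2 = 1) : Nonempty (G ≃* Multiplicative (Fin n → ZMod 2)) := by
  have : Finite G := Nat.finite_of_card_ne_zero (by simp [hG])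
  let _ : CommGroup G :=
    { mul_comm := Commute.of_orderOf_dvd_two fun g => orderOf_dvd_of_pow_eq_one (hsq g) }
  let _ : Module (ZMod 2) (Additive G) := AddCommGroup.zmodModule fun g => hsq g.toMul
  have : Module.Finite (ZMod 2) (Additive G) := .of_finite
  have hrank : Module.finrank (ZMod 2) (Additive G) = n := by
    apply Nat.pow_right_injective le_rfl
    have := Module.natCard_eq_pow_finrank (K := ZMod 2) (V := Additive G)
    rw [Nat.card_zmod] at this
    exact this.symm.trans hG
  exact ⟨AddEquiv.toMultiplicativeRight (LinearEquiv.ofFinrankEq _ (Fin n → ZMod 2)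
    (hrank.trans (Module.finrank_fin_fun (ZMod 2)).symm)).toAddEquiv⟩

theorem orderOf_eq_one_or_two_or_four_or_eight (hG : Nat.card G = 8) (g : G) :
    orderOf g = 1 ∨ orderOf g = 2 ∨ orderOf g = 4 ∨ orderOf g = 8 := by
  obtain ⟨k, hk, hg⟩ := (Nat.dvd_prime_pow Nat.prime_two).1
    (show orderOf g ∣ 2 ^ 3 by simpa [hG] using orderOf_dvd_natCard g)
  interval_cases k <;> simp [hg]

theorem card_fixed_eq_two [Fintype G] [DecidableEq G] (hG : Nat.card G = 8) {φ : MulAut G}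
    (hφ : orderOf φ = 3) : #{g | φ g = g} = 2 := by
  have hF : Nat.card (MonoidHom.eqLocus φ.toMonoidHom (.id G)) = #{g | φ g = g} := by
    rw [← Fintype.card_subtype, ← Nat.card_eq_fintype_card]; rfl
  have hdvd : #{g | φ g = g} ∣ 8 := hF ▸ hG ▸ card_subgroup_dvd_card _
  have hmod : #{g | φ g = g} ≡ 8 [MOD 3] := by
    have := Equiv.Perm.card_filter_modEq_card_filter_and_fixed (p := 3) (σ := MulAut.toPerm G φ)
      (by rw [← map_pow, ← hφ, pow_orderOf_eq_one, map_one]) (P := fun _ => True) fun _ => Iff.rfl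
    simp only [filter_true, card_univ, ← Nat.card_eq_fintype_card, hG, true_and] at this
    exact this.symm
  have hne : #{g | φ g = g} ≠ 8 := by
    intro h8
    have hall := filter_eq_self.1 <| eq_univ_of_card _ <|
      h8.trans <| hG.symm.trans Nat.card_eq_fintype_card
    have : φ = 1 := MulEquiv.ext fun g => by simpa using hall g (mem_univ g)
    simp [this] at hφ
  have := Nat.le_of_dvd (by norm_num) hdvd
  unfold Nat.ModEq at hmod
  interval_cases h : #{g | φ g = g} <;> omega

theorem exists_fixed_iff_eq_one_or_eq [Fintype G] [DecidableEq G] (hG : Nat.card G = 8)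
    {φ : MulAut G} (hφ : orderOf φ = 3) :
    ∃ z : G, orderOf z = 2 ∧ ∀ g, φ g = g ↔ g = 1 ∨ g = z := by
  obtain ⟨a, b, hab, hfix⟩ := card_eq_two.1 (card_fixed_eq_two hG hφ)
  have hmem (g : G) : φ g = g ↔ g = a ∨ g = b := by simpa using congrArg (g ∈ ·) hfix
  obtain ⟨z, hz1, hfix⟩ : ∃ z ≠ 1, ∀ g, φ g = g ↔ g = 1 ∨ g = z := by
    rcases (hmem 1).1 (map_one φ) with rfl | rfl
    · exact ⟨b, hab.symm, hmem⟩
    · exact ⟨a, hab, fun g => (hmem g).trans or_comm⟩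
  refine ⟨z, orderOf_eq_prime ?_ hz1, hfix⟩
  rcases (hfix (z ^ 2)).1 (by rw [map_pow, (hfix z).2 (.inr rfl)]) with h | h
  · exact h
  · exact absurd (by simpa [sq] using h) hz1

theorem card_orderOf_eq_two_modEq_one [Fintype G] [DecidableEq G] (hG : Nat.card G = 8)
    {φ : MulAut G} (hφ : orderOf φ = 3) : #{g : G | orderOf g = 2} ≡ 1 [MOD 3] := by
  obtain ⟨z, hz, hfix⟩ := exists_fixed_iff_eq_one_or_eq hG hφ
  have hfix2 : #{g : G | orderOf g = 2 ∧ φ g = g} = 1 := card_eq_one.2 ⟨z, by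
    ext g
    simp only [mem_filter, mem_univ, true_and, mem_singleton, hfix]
    constructor
    · rintro ⟨h2, rfl | rfl⟩
      · simp at h2
      · rfl
    · rintro rfl
      exact ⟨hz, .inr rfl⟩⟩
  rw [← hfix2]
  exact MulAut.card_orderOf_eq_modEq (hφ ▸ pow_orderOf_eq_one φ) 2

theorem three_dvd_card_orderOf_eq [Fintype G] [DecidableEq G] (hG : Nat.card G = 8)
    {φ : MulAut G} (hφ : orderOf φ = 3) {d : ℕ} (hd : 2 < d) : 3 ∣ #{g : G | orderOf g = d} := by
  obtain ⟨z, hz, hfix⟩ := exists_fixed_iff_eq_one_or_eq hG hφ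
  have hfixd : #{g : G | orderOf g = d ∧ φ g = g} = 0 := by
    refine card_eq_zero.2 <| filter_eq_empty_iff.2 fun g _ ⟨hgd, hg⟩ => ?_
    rcases (hfix g).1 hg with rfl | rfl
    · rw [orderOf_one] at hgd; omega
    · omega
  have := MulAut.card_orderOf_eq_modEq (hφ ▸ pow_orderOf_eq_one φ) d
  rwa [hfixd, Nat.modEq_zero_iff_dvd] at this

theorem exists_quaternion_relations (hG : Nat.card G = 8) (hcyc : ¬IsCyclic G)
    (hinv : {g : G | orderOf g = 2}.Subsingleton) {x : G} (hx : orderOf x = 4) :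
    ∃ y, y ∉ zpowers x ∧ y ^ 2 = x ^ 2 ∧ x * y = y * x⁻¹ := by
  have : Finite G := Nat.finite_of_card_ne_zero (by omega)
  have hx2 : orderOf (x ^ 2) = 2 := by
    rw [orderOf_pow_of_dvd two_ne_zero (by rw [hx]; norm_num), hx]
  have hsq (g : G) (hg : g ∉ zpowers x) : g ^ 2 = x ^ 2 := by
    rcases orderOf_eq_one_or_two_or_four_or_eight hG g with h | h | h | h
    · exact absurd (orderOf_eq_one_iff.1 h ▸ one_mem _) hg
    · exact absurd (hinv h hx2 ▸ pow_mem (mem_zpowers x) 2) hg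
    · exact hinv (show orderOf (g ^ 2) = 2 by
        rw [orderOf_pow_of_dvd two_ne_zero (by rw [h]; norm_num), h]) hx2
    · exact absurd (isCyclic_of_orderOf_eq_card g (h.trans hG.symm)) hcyc
  obtain ⟨y, hy⟩ : ∃ y, y ∉ zpowers x := by
    by_contra! h
    have := orderOf_eq_card_of_forall_mem_zpowers h
    omega
  have hxy := hsq (x * y) ((mul_mem_cancel_left (mem_zpowers x)).not.2 hy)
  have hyxy : y * x * y = x := mul_left_cancel (a := x) <| by
    rw [sq, sq] at hxy; simpa only [mul_assoc] using hxy
  refine ⟨y, hy, hsq y hy, ?_⟩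
  have hx4 : x ^ 4 = 1 := hx ▸ pow_orderOf_eq_one x
  have hx3 : x⁻¹ = x ^ 3 := inv_eq_of_mul_eq_one_right ((pow_succ' x 3).symm.trans hx4)
  calc x * y = y * x * y ^ 2 := by rw [sq, ← mul_assoc, hyxy]
    _ = y * x⁻¹ := by rw [hsq y hy, hx3]; group

theorem not_isCyclic_of_orderOf_mulAut_eq_three (hG : Nat.card G = 8) {φ : MulAut G}
    (hφ : orderOf φ = 3) : ¬IsCyclic G := fun _ => by
  classical
  have : Fintype G := @Fintype.ofFinite G (Nat.finite_of_card_ne_zero (by omega))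
  have := three_dvd_card_orderOf_eq hG hφ (d := 8) (by norm_num)
  rw [IsCyclic.card_orderOf_eq_totient (by rw [← Nat.card_eq_fintype_card, hG])] at this
  exact absurd this (by decide)

theorem card_orderOf_eq_two_add_card_orderOf_eq_four [Fintype G] [DecidableEq G]
    (hG : Nat.card G = 8) (hcyc : ¬IsCyclic G) :
    #{g : G | orderOf g = 2} + #{g : G | orderOf g = 4} = 7 := by
  have hsum : ∑ m ∈ Nat.divisors 8, #{g : G | orderOf g = m} = 8 := by
    rw [sum_card_orderOf_eq_card_pow_eq_one (by norm_num), filter_true_of_mem fun g _ =>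
      hG ▸ pow_card_eq_one', card_univ, ← Nat.card_eq_fintype_card, hG]
  have h1 : #{g : G | orderOf g = 1} = 1 := card_eq_one.2 ⟨1, by ext; simp⟩
  have h8 : #{g : G | orderOf g = 8} = 0 := card_eq_zero.2 <| filter_eq_empty_iff.2 fun g _ h =>
    hcyc (isCyclic_of_orderOf_eq_card g (h.trans hG.symm))
  rw [show Nat.divisors 8 = {1, 2, 4, 8} by decide] at hsum
  simp only [mem_insert, OfNat.one_ne_ofNat, mem_singleton, or_self, not_false_eq_true, sum_insert,
    Nat.reduceEqDiff, sum_singleton] at hsum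
  omega

theorem forall_sq_eq_one_or_exists_orderOf_eq_four (hG : Nat.card G = 8) {φ : MulAut G}
    (hφ : orderOf φ = 3) :
    (∀ g : G, g ^ 2 = 1) ∨ ({g : G | orderOf g = 2}.Subsingleton ∧ ∃ x : G, orderOf x = 4) := by
  classical
  have : Fintype G := @Fintype.ofFinite G (Nat.finite_of_card_ne_zero (by omega))
  have hcyc := not_isCyclic_of_orderOf_mulAut_eq_three hG hφ
  have h7 := card_orderOf_eq_two_add_card_orderOf_eq_four hG hcyc
  have h2 := card_orderOf_eq_two_modEq_one hG hφ
  have h4 := three_dvd_card_orderOf_eq hG hφ (d := 4) (by norm_num)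
  have h4' := two_dvd_card_orderOf_eq (G := G) (d := 4) (by norm_num)
  unfold Nat.ModEq at h2
  rcases (by omega : #{g : G | orderOf g = 4} = 0 ∨
      #{g : G | orderOf g = 2} = 1 ∧ 0 < #{g : G | orderOf g = 4}) with h4 | ⟨h2, h4⟩
  · left
    intro g
    rcases orderOf_eq_one_or_two_or_four_or_eight hG g with h | h | h | h
    · rw [orderOf_eq_one_iff.1 h, one_pow]
    · rw [← h, pow_orderOf_eq_one]
    · exact absurd h (filter_eq_empty_iff.1 (card_eq_zero.1 h4) (mem_univ g))
    · exact absurd (isCyclic_of_orderOf_eq_card g (h.trans hG.symm)) hcyc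
  · obtain ⟨x, hx⟩ := card_pos.1 h4
    exact .inr ⟨fun a ha b hb => card_le_one.1 h2.le a (by simpa using ha) b (by simpa using hb),
      x, by simpa using hx⟩

end

def rotateCoordinates : MulAut (Multiplicative (Fin 3 → ZMod 2)) :=
  AddEquiv.toMultiplicative (LinearEquiv.funCongrLeft (ZMod 2) (ZMod 2) (finRotate 3)).toAddEquiv

theorem orderOf_rotateCoordinates : orderOf rotateCoordinates = 3 :=
  orderOf_eq_prime (MulEquiv.ext fun v => funext fun i => by fin_cases i <;> rfl) fun h => by
    have := congrFun (DFunLike.congr_fun h (Multiplicative.ofAdd (Pi.single 0 1))) 2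
    revert this; decide

open QuaternionGroup in
/-- The rotation `i ↦ j ↦ k ↦ i` of the quaternion units, with `i = a 1`, `j = xa 0`,
`k = xa 3`. -/
def rotateQuaternionUnitsFun : QuaternionGroup 2 → QuaternionGroup 2
  | a i => ![a 0, xa 0, a 2, xa 2] i
  | xa i => ![xa 3, a 3, xa 1, a 1] i

def rotateQuaternionUnits : MulAut (QuaternionGroup 2) where
  toFun := rotateQuaternionUnitsFun
  invFun := rotateQuaternionUnitsFun ∘ rotateQuaternionUnitsFun
  left_inv := by decide
  right_inv := by decide
  map_mul' := by decide

theorem orderOf_rotateQuaternionUnits : orderOf rotateQuaternionUnits = 3 :=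
  orderOf_eq_prime (MulEquiv.ext <| by decide) fun h => by
    have := DFunLike.congr_fun h (QuaternionGroup.a 1)
    revert this; decide

/-- A group of order 8 admits an automorphism of order 3 if and only if it is
isomorphic to the elementary abelian group `(ℤ/2ℤ)^3` or to the quaternion group `Q8`. -/
theorem order8_aut_of_order_three_iff (G : Type*) [Group G] (h : Nat.card G = 8) :
    (∃ φ : MulAut G, orderOf φ = 3) ↔
      (Nonempty (G ≃* Multiplicative (Fin 3 → ZMod 2)) ∨
        Nonempty (G ≃* QuaternionGroup 2)) := by
  constructor
  · rintro ⟨φ, hφ⟩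
    rcases forall_sq_eq_one_or_exists_orderOf_eq_four h hφ with hsq | ⟨hinv, x, hx⟩
    · exact .inl (nonempty_mulEquiv_of_forall_sq_eq_one (by rw [h]; rfl) hsq)
    · obtain ⟨y, hy, hyx, hxy⟩ :=
        exists_quaternion_relations h (not_isCyclic_of_orderOf_mulAut_eq_three h hφ) hinv hx
      exact .inr ((QuaternionGroup.nonempty_mulEquiv_of_relations (by rw [h]) hx hy hyx hxy).map
        MulEquiv.symm)
  · rintro (he | he) <;> obtain ⟨e⟩ := he
    · exact ⟨(MulAut.congr e).symm rotateCoordinates,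
        (MulEquiv.orderOf_eq _ _).trans orderOf_rotateCoordinates⟩
    · exact ⟨(MulAut.congr e).symm rotateQuaternionUnits,
        (MulEquiv.orderOf_eq _ _).trans orderOf_rotateQuaternionUnits⟩
end

section
/- For every injective group homomorphism φ from the cyclic group ℤ/3ℤ to the automorphism group of (ℤ/2ℤ)^3, the semidirect product (ℤ/2ℤ)^3 ⋊_φ ℤ/3ℤ is isomorphic to A4 × C2, the direct product of the alternating group on 4 letters with a cyclic group of order 2. -/
/-!
The image of an injective `φ : C₃ → Aut((ℤ/2ℤ)³) ≅ GL₃(𝔽₂)` is a Sylow `3`-subgroup, since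
`|GL₃(𝔽₂)| = 7 · 6 · 4 = 168 = 2³ · 3 · 7`. Any two Sylow subgroups are conjugate, and injective
actions with conjugate images give isomorphic semidirect products (after reparametrising `C₃`),
so the semidirect product does not depend on `φ`. For the action of `C₃` permuting the three
coordinates cyclically, an explicit isomorphism onto `A₄ × C₂` sends the `i`-th basis vector to
`(dᵢ, c)`, where `d₀, d₁, d₂` are the double transpositions, permuted cyclically by conjugation
with a `3`-cycle `γ`, and `c` generates `C₂`; the generator of `C₃` goes to `(γ, 1)`.
-/

open Function

namespace SemidirectProduct

variable {N G : Type*} [Group N] [Group G]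

noncomputable def mulEquivOfRangeEqMapConj {φ ψ : G →* MulAut N} (hφ : Injective φ)
    (hψ : Injective ψ) (τ : MulAut N)
    (h : ψ.range = φ.range.map (MulAut.conj τ).toMonoidHom) : N ⋊[φ] G ≃* N ⋊[ψ] G :=
  let α : G ≃* G := (MonoidHom.ofInjective hφ).trans <|
    (φ.range.equivMapOfInjective _ (MulAut.conj τ).injective).trans <|
      (MulEquiv.subgroupCongr h.symm).trans (MonoidHom.ofInjective hψ).symm
  congr τ α fun g => by
    have hα : ψ (α g) = MulAut.conj τ (φ g) :=
      congrArg Subtype.val ((MonoidHom.ofInjective hψ).apply_symm_apply _)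
    ext n
    simp [hα]

theorem nonempty_mulEquiv_of_card_eq_pow_factorization {p : ℕ} [Fact p.Prime] [Finite (MulAut N)]
    (hG : Nat.card G = p ^ (Nat.card (MulAut N)).factorization p)
    {φ ψ : G →* MulAut N} (hφ : Injective φ) (hψ : Injective ψ) :
    Nonempty (N ⋊[φ] G ≃* N ⋊[ψ] G) := by
  let P : Sylow p (MulAut N) :=
    .ofCard φ.range (by rw [← hG, Nat.card_congr (MonoidHom.ofInjective hφ).toEquiv])
  let Q : Sylow p (MulAut N) :=
    .ofCard ψ.range (by rw [← hG, Nat.card_congr (MonoidHom.ofInjective hψ).toEquiv])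
  obtain ⟨τ, hτ⟩ := MulAction.exists_smul_eq (MulAut N) P Q
  refine ⟨mulEquivOfRangeEqMapConj hφ hψ τ ?_⟩
  change (Q : Subgroup (MulAut N)) = _
  rw [← hτ, Sylow.smul_def]
  rfl

end SemidirectProduct

def AddAut.equivZModLinearEquiv (n : ℕ) (M : Type*) [AddCommGroup M] [Module (ZMod n) M] :
    AddAut M ≃ (M ≃ₗ[ZMod n] M) where
  toFun e := { e with map_smul' := ZMod.map_smul (e : M →+ M) }
  invFun e := e.toAddEquiv
  left_inv _ := rfl
  right_inv _ := rfl

theorem card_mulAut_multiplicative_fin_zmod (p n : ℕ) [Fact p.Prime] :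
    Nat.card (MulAut (Multiplicative (Fin n → ZMod p))) =
      ∏ i : Fin n, (p ^ n - p ^ (i : ℕ)) := by
  rw [← Nat.card_congr AddEquiv.toMultiplicative,
    Nat.card_congr (AddAut.equivZModLinearEquiv p _),
    ← Nat.card_congr (LinearMap.GeneralLinearGroup.generalLinearEquiv _ _).toEquiv,
    ← Nat.card_congr Matrix.GeneralLinearGroup.toLin.toEquiv, Matrix.card_GL_field, ZMod.card]

def zmodPowHom {G : Type*} [Monoid G] (n : ℕ) [NeZero n] (x : G) (hx : x ^ n = 1) :
    Multiplicative (ZMod n) →* G where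
  toFun k := x ^ k.toAdd.val
  map_one' := by simp
  map_mul' a b := by
    simp only [toAdd_mul, ZMod.val_add, ← pow_add, ← pow_eq_pow_mod _ hx]

def rotateCoords (n : ℕ) (A : Type*) [AddGroup A] : MulAut (Multiplicative (Fin n → A)) :=
  (AddEquiv.arrowCongr (finRotate n) (AddEquiv.refl A)).toMultiplicative

local notation "V" => Multiplicative (Fin 3 → ZMod 2)

local notation "C₂" => Multiplicative (ZMod 2)

local notation "C₃" => Multiplicative (ZMod 3)

local notation "A₄" => alternatingGroup (Fin 4)

theorem factorization_card_mulAut_three : (Nat.card (MulAut V)).factorization 3 = 1 := by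
  rw [card_mulAut_multiplicative_fin_zmod, Nat.factorization_def _ Nat.prime_three,
    show ∏ i : Fin 3, (2 ^ 3 - 2 ^ (i : ℕ)) = 3 * 56 by rfl,
    padicValNat.mul (by norm_num) (by norm_num)]
  simp [padicValNat.eq_zero_of_not_dvd]

def rotateAction : C₃ →* MulAut V :=
  zmodPowHom 3 (rotateCoords 3 (ZMod 2)) (by ext v; decide +revert)

theorem rotateAction_injective : Injective rotateAction :=
  (injective_iff_map_eq_one _).2 <| by
    simp only [MulEquiv.ext_iff, MulAut.one_apply]
    decide

open Equiv in
def doubleTransposition : Fin 3 → A₄ :=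
  ![⟨swap 0 1 * swap 2 3, Perm.mem_alternatingGroup.mpr (by decide)⟩,
    ⟨swap 0 2 * swap 1 3, Perm.mem_alternatingGroup.mpr (by decide)⟩,
    ⟨swap 0 3 * swap 1 2, Perm.mem_alternatingGroup.mpr (by decide)⟩]

open Equiv in
def threeCycle : A₄ :=
  ⟨swap 1 2 * swap 2 3, Perm.mem_alternatingGroup.mpr (by decide)⟩

def embedV : V →* A₄ × C₂ where
  toFun v := (List.ofFn fun i => (doubleTransposition i, .ofAdd 1) ^ (v.toAdd i).val).prod
  map_one' := by decide
  map_mul' := by decide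

def embedC3 : C₃ →* A₄ × C₂ :=
  zmodPowHom 3 (threeCycle, 1) (by decide)

theorem embedV_rotateAction (g : C₃) :
    embedV.comp (rotateAction g).toMonoidHom =
      (MulAut.conj (embedC3 g)).toMonoidHom.comp embedV := by
  refine MonoidHom.ext fun v => ?_
  revert g v
  decide

theorem embedV_mul_embedC3_eq_one : ∀ v g, embedV v * embedC3 g = 1 → v = 1 ∧ g = 1 := by
  decide

theorem nonempty_mulEquiv_rotateAction :
    Nonempty (V ⋊[rotateAction] C₃ ≃* A₄ × C₂) := by
  let Ψ := SemidirectProduct.lift embedV embedC3 embedV_rotateAction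
  have hinj : Injective Ψ := (injective_iff_map_eq_one Ψ).2 fun ⟨v, g⟩ h => by
    obtain ⟨rfl, rfl⟩ := embedV_mul_embedC3_eq_one v g h
    rfl
  have hcard : Nat.card (V ⋊[rotateAction] C₃) = Nat.card (A₄ × C₂) := by
    rw [SemidirectProduct.card, Nat.card_prod, nat_card_alternatingGroup]
    simp [Nat.factorial]
  exact ⟨.ofBijective Ψ ((Nat.bijective_iff_injective_and_card Ψ).2 ⟨hinj, hcard⟩)⟩

/-- For every injective group homomorphism `φ` from the cyclic group of order 3 to the
automorphism group of `(ℤ/2ℤ)^3`, the semidirect product `(ℤ/2ℤ)^3 ⋊[φ] ℤ/3ℤ` is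
isomorphic to `A4 × C2`. -/
theorem semidirect_elemAb8_C3_iso_A4_prod_C2
    (φ : Multiplicative (ZMod 3) →* MulAut (Multiplicative (Fin 3 → ZMod 2)))
    (hφ : Function.Injective φ) :
    Nonempty ((Multiplicative (Fin 3 → ZMod 2) ⋊[φ] Multiplicative (ZMod 3)) ≃*
      (alternatingGroup (Fin 4) × Multiplicative (ZMod 2))) := by
  have hcard : Nat.card C₃ = 3 ^ (Nat.card (MulAut V)).factorization 3 := by
    rw [factorization_card_mulAut_three, pow_one, Nat.card_eq_fintype_card,
      Fintype.card_multiplicative, ZMod.card]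
  obtain ⟨e⟩ := SemidirectProduct.nonempty_mulEquiv_of_card_eq_pow_factorization hcard hφ rotateAction_injective
  obtain ⟨f⟩ := nonempty_mulEquiv_rotateAction
  exact ⟨e.trans f⟩
end

section
/- For every injective group homomorphism φ from the cyclic group ℤ/3ℤ to the automorphism group of the quaternion group Q8, the semidirect product Q8 ⋊_φ ℤ/3ℤ is isomorphic to SL(2,3), the special linear group of 2×2 matrices of determinant 1 over the field with three elements. -/
/-!
The matrices `[[0, -1], [1, 0]]` and `[[1, 1], [1, -1]]` generate a copy of `Q8` inside
`SL(2,3)`. Every automorphism `α` of `Q8` with `α³ = 1` is induced, through this embedding, by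
conjugation with some `t ∈ SL(2,3)` with `t³ = 1`; since `α` is determined by the images of the two
generators, this is a finite check. For `α = φ(1) ≠ 1` the element `t` has order 3, and
`(q, k) ↦ q · tᵏ` is a homomorphism `Q8 ⋊_φ C₃ → SL(2,3)`. It is injective because the images of
`Q8` and `C₃` have coprime orders, hence bijective since both groups have 24 elements.
-/

open QuaternionGroup Multiplicative
open scoped MatrixGroups

namespace SemidirectProduct

variable {N G H : Type*} [Group N] [Group G] [Group H] {φ : G →* MulAut N}
  {fn : N →* H} {fg : G →* H}

theorem lift_injective
    (h : ∀ g, fn.comp (φ g).toMonoidHom = (MulAut.conj (fg g)).toMonoidHom.comp fn)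
    (hn : Function.Injective fn) (hg : Function.Injective fg)
    (hdisj : Disjoint fn.range fg.range) : Function.Injective (lift fn fg h) := by
  refine (injective_iff_map_eq_one _).2 fun x hx => ?_
  rw [← inl_left_mul_inr_right x, map_mul, lift_inl, lift_inr] at hx
  have hright : fg x.right = 1 := by
    refine Subgroup.disjoint_def.1 hdisj ⟨x.left⁻¹, ?_⟩ ⟨x.right, rfl⟩
    rw [map_inv, eq_inv_of_mul_eq_one_right hx]
  have hleft : fn x.left = 1 := by rwa [hright, mul_one] at hx
  ext
  · exact (map_eq_one_iff fn hn).1 hleft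
  · exact (map_eq_one_iff fg hg).1 hright

end SemidirectProduct

theorem MonoidHom.disjoint_range_of_coprime {G₁ G₂ H : Type*} [Group G₁] [Group G₂] [Group H]
    (f₁ : G₁ →* H) (f₂ : G₂ →* H) (hcop : Nat.Coprime (Nat.card G₁) (Nat.card G₂)) :
    Disjoint f₁.range f₂.range :=
  Subgroup.disjoint_of_coprime_natCard <|
    (hcop.coprime_dvd_left (Subgroup.card_range_dvd f₁)).coprime_dvd_right
      (Subgroup.card_range_dvd f₂)

theorem MonoidHom.map_pow_apply_eq_conj {N H : Type*} [Group N] [Group H] (F : N →* H)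
    {α : MulAut N} {t : H} (h : ∀ q, F (α q) = t * F q * t⁻¹) (k : ℕ) (q : N) :
    F ((α ^ k) q) = t ^ k * F q * (t ^ k)⁻¹ := by
  induction k generalizing q with
  | zero => simp
  | succ k ih => rw [pow_succ, MulAut.mul_apply, ih, h]; group

theorem Multiplicative.ofAdd_one_pow_val {n : ℕ} [NeZero n] (c : Multiplicative (ZMod n)) :
    ofAdd (1 : ZMod n) ^ (toAdd c).val = c := by
  rw [← ofAdd_nsmul, nsmul_one, ZMod.natCast_zmod_val, ofAdd_toAdd]

def ZMod.powHom {M : Type*} [Monoid M] {n : ℕ} [NeZero n] (t : M) (ht : t ^ n = 1) :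
    Multiplicative (ZMod n) →* M where
  toFun c := t ^ (toAdd c).val
  map_one' := by simp
  map_mul' a b := by rw [toAdd_mul, ZMod.val_add, ← pow_eq_pow_mod _ ht, pow_add]

theorem ZMod.powHom_injective {G : Type*} [Group G] {p : ℕ} [Fact p.Prime] {t : G}
    (ht : t ^ p = 1) (ht1 : t ≠ 1) : Function.Injective (ZMod.powHom t ht) := by
  refine (injective_iff_map_eq_one _).2 fun c hc => ?_
  have hdvd : orderOf t ∣ (toAdd c).val := orderOf_dvd_of_pow_eq_one hc
  rw [orderOf_eq_prime ht ht1] at hdvd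
  rw [← ofAdd_toAdd c, (ZMod.val_eq_zero _).1 (Nat.eq_zero_of_dvd_of_lt hdvd (ZMod.val_lt _))]
  rfl

theorem MonoidHom.comp_mulAut_eq_conj_powHom {n : ℕ} [NeZero n] {N H : Type*} [Group N]
    [Group H] (φ : Multiplicative (ZMod n) →* MulAut N) (F : N →* H) {t : H} (ht : t ^ n = 1)
    (h : ∀ q, F (φ (ofAdd 1) q) = t * F q * t⁻¹) (c : Multiplicative (ZMod n)) :
    F.comp (φ c).toMonoidHom = (MulAut.conj (ZMod.powHom t ht c)).toMonoidHom.comp F := by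
  ext q
  change F (φ c q) = t ^ (toAdd c).val * F q * (t ^ (toAdd c).val)⁻¹
  conv_lhs => rw [← ofAdd_one_pow_val c, map_pow]
  exact F.map_pow_apply_eq_conj h _ q

namespace QuaternionGroup

variable {n : ℕ} {M : Type*} [Monoid M]

def ofGens (x y : M) : QuaternionGroup n → M
  | a i => x ^ i.val
  | xa i => y * x ^ i.val

theorem monoidHom_eq_ofGens [NeZero n] (f : QuaternionGroup n →* M) :
    ⇑f = ofGens (f (a 1)) (f (xa 0)) := by
  funext q
  cases q with
  | a i => rw [ofGens, ← map_pow, a_one_pow, ZMod.natCast_zmod_val]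
  | xa i =>
    rw [ofGens, ← map_pow, a_one_pow, ZMod.natCast_zmod_val, ← map_mul, xa_mul_a, zero_add]

end QuaternionGroup

def quaternionToSL : QuaternionGroup 2 →* SL(2, ZMod 3) where
  toFun := ofGens ⟨!![0, -1; 1, 0], by decide⟩ ⟨!![1, 1; 1, -1], by decide⟩
  map_one' := by decide
  map_mul' := by decide

theorem quaternionToSL_injective : Function.Injective quaternionToSL := by decide

theorem card_SL_two_zmod_three : Nat.card SL(2, ZMod 3) = 24 := by
  rw [Nat.card_eq_fintype_card]; decide

theorem exists_conj_quaternionToSL_of_pow_three_eq_one (α : MulAut (QuaternionGroup 2))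
    (hα : α ^ 3 = 1) :
    ∃ t : SL(2, ZMod 3), t ^ 3 = 1 ∧ ∀ q, quaternionToSL (α q) = t * quaternionToSL q * t⁻¹ := by
  have key : ∀ x y : QuaternionGroup 2,
      (∀ p q : QuaternionGroup 2, ofGens x y (p * q) = ofGens x y p * ofGens x y q) →
      (∀ q : QuaternionGroup 2, ofGens x y (ofGens x y (ofGens x y q)) = q) →
      ∃ t : SL(2, ZMod 3), t ^ 3 = 1 ∧
        ∀ q, quaternionToSL (ofGens x y q) = t * quaternionToSL q * t⁻¹ := by
    decide
  have hαgen : ⇑α = ofGens (α (a 1)) (α (xa 0)) := monoidHom_eq_ofGens α.toMonoidHom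
  rw [hαgen]
  refine key _ _ (fun p q => ?_) (fun q => ?_)
  · rw [← hαgen, map_mul]
  · rw [← hαgen, ← MulAut.mul_apply, ← MulAut.mul_apply, ← pow_three', hα, MulAut.one_apply]

/-- For every injective group homomorphism `φ` from the cyclic group of order 3 to the
automorphism group of `Q8`, the semidirect product `Q8 ⋊[φ] ℤ/3ℤ` is isomorphic to
`SL(2,3)`. -/
theorem semidirect_Q8_C3_iso_SL23
    (φ : Multiplicative (ZMod 3) →* MulAut (QuaternionGroup 2))
    (hφ : Function.Injective φ) :
    Nonempty ((QuaternionGroup 2 ⋊[φ] Multiplicative (ZMod 3)) ≃*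
      Matrix.SpecialLinearGroup (Fin 2) (ZMod 3)) := by
  have hα : φ (ofAdd 1) ^ 3 = 1 := by
    rw [← map_pow, show (ofAdd 1 : Multiplicative (ZMod 3)) ^ 3 = 1 from rfl, map_one]
  obtain ⟨t, ht3, hconj⟩ := exists_conj_quaternionToSL_of_pow_three_eq_one _ hα
  have ht1 : t ≠ 1 := by
    rintro rfl
    have hαφ : φ (ofAdd 1) = φ 1 :=
      MulEquiv.ext fun q => quaternionToSL_injective (by simpa using hconj q)
    exact absurd (hφ hαφ) (by decide)
  have hdisj : Disjoint quaternionToSL.range (ZMod.powHom t ht3).range :=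
    MonoidHom.disjoint_range_of_coprime _ _ <| by
      norm_num [Nat.card_eq_fintype_card, QuaternionGroup.card]
  have hinj := SemidirectProduct.lift_injective
    (MonoidHom.comp_mulAut_eq_conj_powHom φ _ ht3 hconj) quaternionToSL_injective
    (ZMod.powHom_injective ht3 ht1) hdisj
  refine ⟨MulEquiv.ofBijective _ (hinj.bijective_of_nat_card_le ?_)⟩
  rw [SemidirectProduct.card, card_SL_two_zmod_three]
  simp [Nat.card_eq_fintype_card, QuaternionGroup.card]
end

section
/- There exists a group G of order 48 with a normal subgroup N of index 2 isomorphic to SL(2,3) such that no subgroup of G is a complement to N; that is, G is a nonsplit extension of SL(2,3) by a cyclic group of order 2 (the binary octahedral group ⟨2,3,4⟩). -/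
/-!
Let `𝔽₉ = 𝔽₃(ω)` with `ω² = -1` and let `σ` be the Frobenius acting entrywise on `SL(2, 𝔽₉)`.
The matrices `g` with `σ g = ±g` form a group `G` on which `g ↦ g⁻¹ σ g ∈ {±1}` is a
homomorphism, because its values are central. Its kernel, the `σ`-fixed matrices, is `SL(2, 3)`,
and `diag(ω, -ω)` is sent to `-1`, so `SL(2, 3)` has index 2 in `G`. A complement would be
generated by an involution outside `SL(2, 3)`, but in odd characteristic the only involution of
`SL(2, K)` is `-1`.
-/

open Subgroup MatrixGroups

namespace MonoidHom

variable {G : Type*} [Group G] (σ : G →* G)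

theorem inv_mul_map_mul_of_mem_center {a : G} (ha : a⁻¹ * σ a ∈ center G) (b : G) :
    (a * b)⁻¹ * σ (a * b) = (a⁻¹ * σ a) * (b⁻¹ * σ b) :=
  calc (a * b)⁻¹ * σ (a * b) = b⁻¹ * (a⁻¹ * σ a) * σ b := by rw [map_mul]; group
    _ = (a⁻¹ * σ a) * (b⁻¹ * σ b) := by rw [mem_center_iff.mp ha b⁻¹, mul_assoc]

variable {z : G} (hz : z ∈ center G)

def fixedModulo : Subgroup G where
  carrier := {g | g⁻¹ * σ g ∈ zpowers z}
  one_mem' := by simp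
  mul_mem' {a b} ha hb := by
    rw [Set.mem_ofPred_eq, inv_mul_map_mul_of_mem_center σ (zpowers_le.mpr hz ha)]
    exact mul_mem ha hb
  inv_mem' {a} ha := by
    have h := inv_mul_map_mul_of_mem_center σ (zpowers_le.mpr hz ha) a⁻¹
    rw [mul_inv_cancel, inv_one, map_one, one_mul, eq_comm] at h
    rw [Set.mem_ofPred_eq, eq_inv_of_mul_eq_one_right h]
    exact inv_mem ha

theorem mem_fixedModulo {g : G} : g ∈ σ.fixedModulo hz ↔ g⁻¹ * σ g ∈ zpowers z := Iff.rfl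

def fixedModuloDefect : σ.fixedModulo hz →* zpowers z where
  toFun g := ⟨g⁻¹ * σ g, g.2⟩
  map_one' := by ext; simp
  map_mul' a b := by
    ext
    exact inv_mul_map_mul_of_mem_center σ (zpowers_le.mpr hz a.2) b

theorem ker_fixedModuloDefect :
    (σ.fixedModuloDefect hz).ker = (σ.eqLocus (.id G)).subgroupOf (σ.fixedModulo hz) := by
  ext g
  rw [mem_ker, mem_subgroupOf, Subtype.ext_iff]
  exact inv_mul_eq_one.trans eq_comm

theorem eqLocus_le_fixedModulo : σ.eqLocus (.id G) ≤ σ.fixedModulo hz :=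
  fun g (hg : σ g = g) => by
    rw [mem_fixedModulo, hg, inv_mul_cancel]
    exact one_mem _

theorem index_ker_fixedModuloDefect {u : G} (hu : u⁻¹ * σ u = z) :
    (σ.fixedModuloDefect hz).ker.index = orderOf z := by
  have hu' : u ∈ σ.fixedModulo hz := by rw [mem_fixedModulo, hu]; exact mem_zpowers z
  have hsurj : Function.Surjective (σ.fixedModuloDefect hz) := by
    rintro ⟨w, k, rfl⟩
    have hzu : σ.fixedModuloDefect hz ⟨u, hu'⟩ = ⟨z, mem_zpowers z⟩ := Subtype.ext hu
    exact ⟨⟨u, hu'⟩ ^ k, by rw [map_zpow, hzu]; rfl⟩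
  rw [index_ker, range_eq_top.mpr hsurj, card_top, Nat.card_zpowers]

end MonoidHom

theorem Subgroup.not_isComplement'_of_index_eq_two {G : Type*} [Group G] {N : Subgroup G}
    (hN : N.index = 2) (hinv : ∀ g : G, g * g = 1 → g ∈ N) (H : Subgroup G) :
    ¬ N.IsComplement' H := by
  intro h
  obtain rfl | ⟨x, hxH, hx1⟩ := H.bot_or_exists_ne_one
  · rw [isComplement'_bot_right.mp h, index_top] at hN
    exact absurd hN (by norm_num)
  · have hsq : x * x = 1 :=
      disjoint_def.mp h.disjoint (mul_self_mem_of_index_two hN x) (mul_mem hxH hxH)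
    exact hx1 (disjoint_def.mp h.disjoint (hinv x hsq) hxH)

theorem QuadraticAlgebra.star_eq_self_iff {R : Type*} [CommRing R] [NoZeroDivisors R]
    (h2 : (2 : R) ≠ 0) {a : R} {z : QuadraticAlgebra R a 0} :
    star z = z ↔ z ∈ (algebraMap R (QuadraticAlgebra R a 0)).range := by
  constructor
  · intro h
    have him : z.im = 0 := by
      have h' := congrArg im h
      rw [im_star] at h'
      exact (mul_eq_zero.mp (by linear_combination -h' : 2 * z.im = 0)).resolve_left h2
    exact ⟨z.re, by ext <;> simp [him]⟩
  · rintro ⟨r, rfl⟩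
    ext <;> simp

namespace Matrix.SpecialLinearGroup

theorem neg_one_mem_center {n R : Type*} [Fintype n] [DecidableEq n] [CommRing R]
    [Fact (Even (Fintype.card n))] : (-1 : SpecialLinearGroup n R) ∈ center _ :=
  Subgroup.mem_center_iff.mpr fun g => by rw [mul_neg_one, neg_one_mul]

theorem SL2_eq_one_or_eq_neg_one_of_mul_self_eq_one {R : Type*} [CommRing R] [IsDomain R]
    (h2 : (2 : R) ≠ 0) {A : SL(2, R)} (hA : A * A = 1) : A = 1 ∨ A = -1 := by
  have hM : ∀ i j, ∑ k, A i k * A k j = (1 : Matrix (Fin 2) (Fin 2) R) i j := fun i j => by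
    rw [← Matrix.mul_apply, ← coe_mul, hA, coe_one]
  have hdet : A 0 0 * A 1 1 - A 0 1 * A 1 0 = 1 := by
    rw [← Matrix.det_fin_two]; exact A.det_coe
  have h00 := hM 0 0; have h01 := hM 0 1; have h10 := hM 1 0
  simp only [Fin.sum_univ_two, Matrix.one_apply_eq, Matrix.one_apply_ne zero_ne_one,
    Matrix.one_apply_ne one_ne_zero] at h00 h01 h10
  -- a traceless `A` would have `det A = -(A * A) 0 0 = -1`
  have htr : A 0 0 + A 1 1 ≠ 0 := fun h => h2 (by linear_combination A 0 0 * h - h00 - hdet)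
  have hb : A 0 1 = 0 := (mul_eq_zero.mp (by linear_combination h01)).resolve_right htr
  have hc : A 1 0 = 0 := (mul_eq_zero.mp (by linear_combination h10)).resolve_right htr
  have ha : A 0 0 * A 0 0 = 1 := by linear_combination h00 - A 1 0 * hb
  have hd : A 1 1 = A 0 0 := by
    linear_combination A 0 0 * hdet - A 1 1 * ha + A 0 0 * A 1 0 * hb
  have hscalar : ∀ i j, A i j = if i = j then A 0 0 else 0 := by
    intro i j; fin_cases i <;> fin_cases j <;> simp [hb, hc, hd]
  rcases mul_self_eq_one_iff.mp ha with ha | ha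
  · left; ext i j; rw [hscalar, ha]; simp [Matrix.one_apply]
  · right; ext i j; rw [hscalar, ha]; simp [Matrix.one_apply, apply_ite]

theorem map_injective {n : Type*} [Fintype n] [DecidableEq n] {R S : Type*} [CommRing R]
    [CommRing S] {f : R →+* S} (hf : Function.Injective f) :
    Function.Injective (map (n := n) f) := fun _ _ h =>
  Subtype.ext (Matrix.map_injective hf (congrArg Subtype.val h))

theorem mem_range_map_iff {n : Type*} [Fintype n] [DecidableEq n]
    {R S : Type*} [CommRing R] [CommRing S] {f : R →+* S} (hf : Function.Injective f)
    {A : SpecialLinearGroup n S} : A ∈ (map f).range ↔ ∀ i j, A i j ∈ f.range := by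
  refine ⟨fun ⟨B, hB⟩ i j => ⟨B i j, by rw [← hB]; rfl⟩, fun h => ?_⟩
  choose B hB using h
  have hBA : (Matrix.of B).map f = A := Matrix.ext hB
  refine ⟨⟨Matrix.of B, hf ?_⟩, Subtype.ext hBA⟩
  rw [RingHom.map_det, RingHom.mapMatrix_apply, hBA, A.det_coe, map_one]

theorem eqLocus_map_star (n : Type*) [Fintype n] [DecidableEq n]
    {R : Type*} [CommRing R] [NoZeroDivisors R] (h2 : (2 : R) ≠ 0) (a : R) :
    (map (n := n) (starRingEnd (QuadraticAlgebra R a 0))).eqLocus (.id _) =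
      (map (algebraMap R (QuadraticAlgebra R a 0))).range := by
  ext A
  rw [mem_range_map_iff QuadraticAlgebra.algebraMap_injective]
  simp only [← QuadraticAlgebra.star_eq_self_iff h2]
  exact Subtype.ext_iff.trans Matrix.ext_iff.symm

end Matrix.SpecialLinearGroup

open QuadraticAlgebra Matrix.SpecialLinearGroup

namespace SL2F9

abbrev F9 := QuadraticAlgebra (ZMod 3) (-1) 0

-- `X ^ 2 + 1` has no root in `ZMod 3`; this is what makes `F9` a field.
instance : Fact (∀ r : ZMod 3, r ^ 2 ≠ -1 + 0 * r) := ⟨by decide⟩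

abbrev frob : SL(2, F9) →* SL(2, F9) := map (starRingEnd F9)

abbrev binaryOctahedral : Subgroup SL(2, F9) := frob.fixedModulo neg_one_mem_center

def sl23 : Subgroup binaryOctahedral := (frob.fixedModuloDefect neg_one_mem_center).ker

def diagOmega : SL(2, F9) := ⟨!![ω, 0; 0, -ω], by decide⟩

theorem frob_diagOmega : frob diagOmega = -diagOmega := by decide

theorem inv_mul_frob_diagOmega : diagOmega⁻¹ * frob diagOmega = -1 := by
  rw [frob_diagOmega, mul_neg, inv_mul_cancel]

theorem orderOf_neg_one : orderOf (-1 : SL(2, F9)) = 2 :=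
  orderOf_eq_prime neg_one_sq (by decide)

theorem index_sl23 : sl23.index = 2 := by
  rw [sl23, MonoidHom.index_ker_fixedModuloDefect _ _ inv_mul_frob_diagOmega, orderOf_neg_one]

noncomputable def sl23Equiv : sl23 ≃* SL(2, ZMod 3) :=
  (MulEquiv.subgroupCongr (MonoidHom.ker_fixedModuloDefect _ _)).trans <|
    (subgroupOfEquivOfLe (MonoidHom.eqLocus_le_fixedModulo _ _)).trans <|
    (MulEquiv.subgroupCongr (eqLocus_map_star (Fin 2) (by decide) (-1))).trans
    (MonoidHom.ofInjective (map_injective QuadraticAlgebra.algebraMap_injective)).symm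

theorem card_binaryOctahedral : Nat.card binaryOctahedral = 48 := by
  have hSL : Nat.card SL(2, ZMod 3) = 24 := by rw [Nat.card_eq_fintype_card]; decide
  rw [← card_mul_index sl23, index_sl23, Nat.card_congr sl23Equiv.toEquiv, hSL]

theorem mem_sl23_of_mul_self_eq_one (g : binaryOctahedral) (hg : g * g = 1) : g ∈ sl23 := by
  rw [sl23, MonoidHom.ker_fixedModuloDefect, mem_subgroupOf]
  show frob g = g
  rcases SL2_eq_one_or_eq_neg_one_of_mul_self_eq_one (by decide) (congrArg Subtype.val hg) with
    h | h <;> rw [h]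
  · exact map_one _
  · decide

end SL2F9

/-- There exists a group of order 48 with a normal subgroup of index 2 isomorphic to
`SL(2,3)` that has no complement: a nonsplit extension of `SL(2,3)` by `C2`
(the binary octahedral group `⟨2,3,4⟩`). -/
theorem exists_nonsplit_extension_SL23_by_C2 :
    ∃ (G : Type) (_ : Group G) (N : Subgroup G),
      Nat.card G = 48 ∧ N.Normal ∧ N.index = 2 ∧
      Nonempty (N ≃* Matrix.SpecialLinearGroup (Fin 2) (ZMod 3)) ∧
      ∀ H : Subgroup G, ¬ Subgroup.IsComplement' N H :=
  ⟨SL2F9.binaryOctahedral, inferInstance, SL2F9.sl23, SL2F9.card_binaryOctahedral,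
    MonoidHom.normal_ker _, SL2F9.index_sl23, ⟨SL2F9.sl23Equiv⟩,
    not_isComplement'_of_index_eq_two SL2F9.index_sl23 SL2F9.mem_sl23_of_mul_self_eq_one⟩
end
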